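/- For integers s ≥ 1 and t ≥ 0, 2√π ∫_{-∞}^{∞} x φ^{(2s-1)}(x) φ^{(2t)}(x) dx = (-1)^{s-t} 2^{-(s+t)} (2s - 2t - 1) OF(2s + 2t - 2), where φ is the standard normal density and OF the odd factorial. -/

import Mathlib

open Real MeasureTheory Finset

noncomputable def stdNormalPDF (x : ℝ) : ℝ := (Real.sqrt (2 * Real.pi))⁻¹ * Real.exp (-x ^ 2 / 2)

def oddFactorial (r : ℕ) : ℝ := ∏ i ∈ Finset.range r, (2 * (i : ℝ) + 1)

/-!
By the Rodrigues formula `φ⁽ⁿ⁾ = (-1)ⁿ Heₙ φ` and `φ² = e^{-x²} / 2π`, the integral equals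
`-(2π)⁻¹ J(X He_{2s-1} He_{2t})`, where `J p = ∫ p(x) e^{-x²} dx`. Integration by parts gives
`J p' = 2 J(X p)`; since `He_{a+1} He_b + He_a He_{b+1} = 2X He_a He_b - (He_a He_b)'`, this yields
`J(He_a He_b) = (-1)ᵃ J(He_{a+b})`. With the recurrence `X He_{n+1} = He_{n+2} + (n+1) He_n` and
`J(He_{n+2}) = -(n+1)/2 · J(He_n)`, everything reduces to `J 1 = √π`.
-/

open Polynomial

namespace Polynomial

theorem derivative_hermite_succ (n : ℕ) :
    derivative (hermite (n + 1)) = (n + 1) • hermite n := by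
  induction n with
  | zero => simp
  | succ n ih =>
    rw [hermite_succ (n + 1), derivative_sub, derivative_mul, derivative_X, one_mul, ih,
      derivative_smul, mul_smul_comm, add_sub_assoc, ← smul_sub, ← hermite_succ]
    module

theorem X_mul_hermite_succ (n : ℕ) :
    X * hermite (n + 1) = hermite (n + 2) + (n + 1) • hermite n := by
  rw [hermite_succ (n + 1), derivative_hermite_succ]
  abel

end Polynomial

theorem integrable_aeval_mul_exp_neg_sq (p : ℤ[X]) :
    Integrable fun x : ℝ => aeval x p * exp (-x ^ 2) := by
  induction p using Polynomial.induction_on' with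
  | add p q hp hq => simpa only [map_add, add_mul] using hp.fun_add hq
  | monomial n a =>
    have h := integrable_rpow_mul_exp_neg_mul_sq (b := 1) one_pos
      (s := n) (neg_one_lt_zero.trans_le n.cast_nonneg)
    simpa [aeval_monomial, mul_assoc, Real.rpow_natCast] using h.const_mul (a : ℝ)

/-- The functional `J` of the header, on `ℤ[X]` since that is where `hermite` lives. -/
noncomputable def gaussianMoment : ℤ[X] →+ ℝ :=
  AddMonoidHom.mk' (fun p => ∫ x : ℝ, aeval x p * exp (-x ^ 2)) fun p q => by
    simp only [map_add, add_mul]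
    exact integral_add (integrable_aeval_mul_exp_neg_sq p) (integrable_aeval_mul_exp_neg_sq q)

theorem gaussianMoment_apply (p : ℤ[X]) :
    gaussianMoment p = ∫ x : ℝ, aeval x p * exp (-x ^ 2) := rfl

theorem gaussianMoment_one : gaussianMoment 1 = √π := by
  simpa [gaussianMoment_apply] using integral_gaussian 1

theorem gaussianMoment_derivative (p : ℤ[X]) :
    gaussianMoment (derivative p) = 2 * gaussianMoment (X * p) := by
  have hderiv (x : ℝ) : HasDerivAt (fun x => aeval x p * exp (-x ^ 2))
      (aeval x (derivative p - 2 * X * p) * exp (-x ^ 2)) x := by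
    refine ((p.hasDerivAt_aeval x).fun_mul (hasDerivAt_pow 2 x).fun_neg.exp).congr_deriv ?_
    simp only [map_sub, map_mul, aeval_X, map_ofNat]
    ring
  have := integral_eq_zero_of_hasDerivAt_of_integrable hderiv
    (integrable_aeval_mul_exp_neg_sq _) (integrable_aeval_mul_exp_neg_sq p)
  rw [← gaussianMoment_apply, mul_assoc, map_sub, two_mul, map_add] at this
  linarith

theorem gaussianMoment_hermite_succ_mul (a b : ℕ) :
    gaussianMoment (hermite (a + 1) * hermite b) =
      -gaussianMoment (hermite a * hermite (b + 1)) := by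
  have hsum : hermite (a + 1) * hermite b + hermite a * hermite (b + 1) =
      X * (hermite a * hermite b) + X * (hermite a * hermite b) -
        derivative (hermite a * hermite b) := by
    rw [hermite_succ, hermite_succ, derivative_mul]
    ring
  have h := congrArg gaussianMoment hsum
  rw [map_add, map_sub, map_add, gaussianMoment_derivative] at h
  linarith

theorem gaussianMoment_hermite_mul (a b : ℕ) :
    gaussianMoment (hermite a * hermite b) = (-1) ^ a * gaussianMoment (hermite (a + b)) := by
  induction a generalizing b with
  | zero => simp [hermite_zero]
  | succ a ih =>
    rw [gaussianMoment_hermite_succ_mul, ih, pow_succ, add_right_comm, ← add_assoc]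
    ring

theorem gaussianMoment_hermite_add_two (n : ℕ) :
    gaussianMoment (hermite (n + 2)) = -((n + 1) / 2) * gaussianMoment (hermite n) := by
  have h := gaussianMoment_derivative (hermite (n + 1))
  rw [derivative_hermite_succ, map_nsmul, nsmul_eq_mul] at h
  rw [hermite_succ (n + 1), map_sub, derivative_hermite_succ, map_nsmul, nsmul_eq_mul]
  push_cast at h ⊢
  linarith

theorem gaussianMoment_hermite_two_mul (m : ℕ) :
    gaussianMoment (hermite (2 * m)) = (-1) ^ m * oddFactorial m / 2 ^ m * √π := by
  induction m with
  | zero => simp [oddFactorial, hermite_zero, gaussianMoment_one]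
  | succ m ih =>
    rw [mul_add, gaussianMoment_hermite_add_two, ih,
      show oddFactorial (m + 1) = oddFactorial m * (2 * m + 1) from prod_range_succ _ _]
    push_cast
    ring

theorem gaussianMoment_X_mul_hermite_succ_mul (a b : ℕ) :
    gaussianMoment (X * hermite (a + 1) * hermite b) =
      (-1) ^ a * (((a : ℝ) - b + 1) / 2) * gaussianMoment (hermite (a + b)) := by
  rw [X_mul_hermite_succ, add_mul, map_add, smul_mul_assoc, map_nsmul, nsmul_eq_mul,
    gaussianMoment_hermite_mul, gaussianMoment_hermite_mul, add_right_comm,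
    gaussianMoment_hermite_add_two, pow_add]
  push_cast
  ring

theorem iteratedDeriv_stdNormalPDF (n : ℕ) (x : ℝ) :
    iteratedDeriv n stdNormalPDF x = (-1) ^ n * aeval x (hermite n) * stdNormalPDF x := by
  have h : stdNormalPDF = fun y => (√(2 * π))⁻¹ * exp (-(y ^ 2 / 2)) := by
    ext y
    rw [stdNormalPDF, neg_div]
  rw [h, iteratedDeriv_const_mul_field, iteratedDeriv_eq_iterate,
    deriv_gaussian_eq_hermite_mul_gaussian]
  ring

theorem stdNormalPDF_mul_self (x : ℝ) :
    stdNormalPDF x * stdNormalPDF x = (2 * π)⁻¹ * exp (-x ^ 2) := by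
  rw [stdNormalPDF, mul_mul_mul_comm, ← mul_inv, mul_self_sqrt (by positivity), ← exp_add]
  ring_nf

theorem integral_aeval_mul_stdNormalPDF_mul_self (p : ℤ[X]) :
    ∫ x, aeval x p * (stdNormalPDF x * stdNormalPDF x) = (2 * π)⁻¹ * gaussianMoment p := by
  simp_rw [stdNormalPDF_mul_self, mul_left_comm _ (2 * π)⁻¹, integral_const_mul]
  rfl

theorem ampw_cor_6_2_2 (s t : ℕ) (hs : 1 ≤ s) :
    2 * Real.sqrt π *
        ∫ x : ℝ, x * iteratedDeriv (2 * s - 1) stdNormalPDF x *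
          iteratedDeriv (2 * t) stdNormalPDF x
      = (-1 : ℝ) ^ ((s : ℤ) - t) * (2 : ℝ) ^ (-((s : ℤ) + t)) *
          (2 * (s : ℝ) - 2 * t - 1) * oddFactorial (s + t - 1) := by
  obtain ⟨s, rfl⟩ := Nat.exists_eq_add_of_le' hs
  have hintegrand (x : ℝ) : x * iteratedDeriv (2 * (s + 1) - 1) stdNormalPDF x *
      iteratedDeriv (2 * t) stdNormalPDF x =
        -(aeval x (X * hermite (2 * s + 1) * hermite (2 * t)) *
          (stdNormalPDF x * stdNormalPDF x)) := by
    rw [show 2 * (s + 1) - 1 = 2 * s + 1 by omega, iteratedDeriv_stdNormalPDF,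
      iteratedDeriv_stdNormalPDF, pow_succ, pow_mul, pow_mul]
    simp only [map_mul, aeval_X]
    ring
  simp_rw [hintegrand, integral_neg, integral_aeval_mul_stdNormalPDF_mul_self,
    gaussianMoment_X_mul_hermite_succ_mul, ← mul_add, gaussianMoment_hermite_two_mul]
  have hsign : (-1 : ℝ) ^ (((s + 1 : ℕ) : ℤ) - t) = -(-1) ^ (s + t) := by
    rw [zpow_sub₀ (by norm_num), zpow_natCast, zpow_natCast, div_eq_mul_inv, ← inv_pow,
      inv_neg_one]
    ring
  have hscale : (2 : ℝ) ^ (-(((s + 1 : ℕ) : ℤ) + t)) = ((2 : ℝ) ^ (s + t + 1))⁻¹ := by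
    rw [zpow_neg, ← Nat.cast_add, zpow_natCast, add_right_comm]
  have hpi : √π ^ 2 = π := sq_sqrt pi_nonneg
  rw [hsign, hscale, show s + 1 + t - 1 = s + t by omega, pow_mul, neg_one_sq, one_pow]
  push_cast
  field_simp
  rw [hpi]
  ring
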